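/- Let S = [[A, B], [B*, G]] : H ⊕ K → H ⊕ K and K = [[K₁₁, K₁₂], [K₁₂*, K₂₂]] : M ⊕ H → M ⊕ H be selfadjoint contractions with ‖K₂₂‖ < 1, and let Ω(z) = A + zB(I − zG)⁻¹B* be the transfer function of the passive selfadjoint system σ = {S; H, H, K}. Define the Redheffer product T := K • S as the block operator on M ⊕ K with entries T₁₁ = K₁₁ + K₁₂ A (I − K₂₂A)⁻¹ K₁₂*, T₁₂ = K₁₂ (I − AK₂₂)⁻¹ B, T₂₁ = B* (I − K₂₂A)⁻¹ K₁₂*, T₂₂ = G + B* K₂₂ (I − AK₂₂)⁻¹ B. Then T is a selfadjoint contraction on M ⊕ K, and the transfer function of the passive selfadjoint system τ = {T; M, M, K}, namely T₁₁ + zT₁₂(I − zT₂₂)⁻¹T₂₁, equals Θ(z) := K₁₁ + K₁₂ Ω(z) (I − K₂₂Ω(z))⁻¹ K₁₂* for all z ∈ Z := ℂ ∖ ((−∞,−1] ∪ [1,+∞)). -/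

import Mathlib

/-!
The Redheffer product `T` is the feedback connection of `K` and `S` through `H`: for every input
`(m, k)` the vector `h = (I − K₂₂A)⁻¹(K₁₂* m + K₂₂ B k)` satisfies `h = K₁₂* m + K₂₂ h'` with
`h' = A h + B k`, and `T (m, k) = (K₁₁ m + K₁₂ h', B* h + G k)`. Adding the contraction
inequalities of `K` at `(m, h')` and of `S` at `(h, k)` shows that `T` is a contraction.
Choosing `k = z (I − zT₂₂)⁻¹ T₂₁ m`, i.e. `k = z (B* h + G k)`, makes `K₁₁ m + K₁₂ h'` the value
of the transfer function of `T` at `m`; the same equation gives `h' = Ω(z) h`, hence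
`h = K₁₂* m + K₂₂ Ω(z) h`, and so that vector is also `Θ(z) m`. Self-adjointness of `T` comes from
the push-through identity `A (I − K₂₂A)⁻¹ = (I − AK₂₂)⁻¹ A`, and `I − K₂₂Ω(z)` is invertible
because it and `I − zT₂₂` are the two Schur complements of one operator matrix.
-/

open Complex ContinuousLinearMap

noncomputable section

variable {M H K : Type*} [NormedAddCommGroup M] [InnerProductSpace ℂ M] [CompleteSpace M]
  [TopologicalSpace.SeparableSpace M]
  [NormedAddCommGroup H] [InnerProductSpace ℂ H] [CompleteSpace H]
  [TopologicalSpace.SeparableSpace H]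
  [NormedAddCommGroup K] [InnerProductSpace ℂ K] [CompleteSpace K]
  [TopologicalSpace.SeparableSpace K]

/-- The domain `Z = ℂ ∖ ((−∞,−1] ∪ [1,+∞))`. -/
def Zdom : Set ℂ := {z : ℂ | z ∉ (fun x : ℝ => (x : ℂ)) '' (Set.Iic (-1) ∪ Set.Ici 1)}

/-- The `2×2` block operator `[[D, C], [B, F]]` on the Hilbert direct sum `E ⊕ E'`. -/
def blockOp {E E' : Type*} [NormedAddCommGroup E] [InnerProductSpace ℂ E] [CompleteSpace E]
    [NormedAddCommGroup E'] [InnerProductSpace ℂ E'] [CompleteSpace E']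
    (D : E →L[ℂ] E) (C : E' →L[ℂ] E) (B : E →L[ℂ] E') (F : E' →L[ℂ] E') :
    WithLp 2 (E × E') →L[ℂ] WithLp 2 (E × E') :=
  ((WithLp.prodContinuousLinearEquiv 2 ℂ E E').symm : (E × E') →L[ℂ] WithLp 2 (E × E')) ∘L
    ((D ∘L ContinuousLinearMap.fst ℂ E E' + C ∘L ContinuousLinearMap.snd ℂ E E').prod
      (B ∘L ContinuousLinearMap.fst ℂ E E' + F ∘L ContinuousLinearMap.snd ℂ E E')) ∘L
    ((WithLp.prodContinuousLinearEquiv 2 ℂ E E') : WithLp 2 (E × E') →L[ℂ] (E × E'))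

/-- The transfer function `z ↦ D + zC(I − zF)⁻¹B` of the system with block operator
`[[D, C], [B, F]]`. -/
def transfer {E E' : Type*} [NormedAddCommGroup E] [InnerProductSpace ℂ E] [CompleteSpace E]
    [NormedAddCommGroup E'] [InnerProductSpace ℂ E'] [CompleteSpace E']
    (D : E →L[ℂ] E) (C : E' →L[ℂ] E) (B : E →L[ℂ] E') (F : E' →L[ℂ] E') (z : ℂ) :
    E →L[ℂ] E :=
  D + z • (C ∘L Ring.inverse ((1 : E' →L[ℂ] E') - z • F) ∘L B)

theorem Ring.mul_inverse_one_sub_mul_comm {R : Type*} [Ring R] {a b : R}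
    (hba : IsUnit (1 - b * a)) (hab : IsUnit (1 - a * b)) :
    a * Ring.inverse (1 - b * a) = Ring.inverse (1 - a * b) * a := by
  have hcomm : (1 - a * b) * a = a * (1 - b * a) := by noncomm_ring
  calc a * Ring.inverse (1 - b * a)
      = Ring.inverse (1 - a * b) * ((1 - a * b) * a) * Ring.inverse (1 - b * a) := by
        rw [← mul_assoc, Ring.inverse_mul_cancel _ hab, one_mul]
    _ = Ring.inverse (1 - a * b) * a := by
        rw [hcomm, mul_assoc, mul_assoc, Ring.mul_inverse_cancel _ hba, mul_one]

section Operators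

variable {𝕜 E F : Type*} [NontriviallyNormedField 𝕜] [NormedAddCommGroup E] [NormedSpace 𝕜 E]
  [NormedAddCommGroup F] [NormedSpace 𝕜 F]

theorem ContinuousLinearMap.inverse_apply_of_apply_eq {f : E →L[𝕜] E} (hf : IsUnit f) {x y : E}
    (hxy : f x = y) : Ring.inverse f y = x := by
  rw [← hxy, ← mul_apply_eq_comp, Ring.inverse_mul_cancel f hf, one_apply_eq_self]

theorem ContinuousLinearMap.apply_inverse_apply {f : E →L[𝕜] E} (hf : IsUnit f) (y : E) :
    f (Ring.inverse f y) = y := by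
  rw [← mul_apply_eq_comp, Ring.mul_inverse_cancel f hf, one_apply_eq_self]

theorem ContinuousLinearMap.inverse_one_sub_apply {f : E →L[𝕜] E} (hf : IsUnit (1 - f)) (y : E) :
    Ring.inverse (1 - f) y = y + f (Ring.inverse (1 - f) y) :=
  sub_eq_iff_eq_add.1 (apply_inverse_apply hf y)

/-- Jacobson's lemma for operators between two spaces: the inverse is `1 + X (1 - YX)⁻¹ Y`. -/
theorem ContinuousLinearMap.isUnit_one_sub_comp_comm {X : F →L[𝕜] E} {Y : E →L[𝕜] F}
    (h : IsUnit (1 - Y ∘L X)) : IsUnit (1 - X ∘L Y) := by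
  set W := Ring.inverse (1 - Y ∘L X)
  have hW : ∀ w, W w - Y (X (W w)) = w := apply_inverse_apply h
  have hW' : ∀ w, W (w - Y (X w)) = w := fun w => inverse_apply_of_apply_eq h rfl
  refine isUnit_iff_exists.2 ⟨1 + X ∘L W ∘L Y, ?_, ?_⟩ <;> ext v
  · have hXW := congrArg X (hW (Y v))
    simp only [map_sub] at hXW
    simp only [mul_apply_eq_comp, sub_apply, add_apply, one_apply_eq_self, comp_apply]
    rw [map_add Y, map_add X, ← hXW]
    abel
  · simp only [mul_apply_eq_comp, sub_apply, add_apply, one_apply_eq_self, comp_apply]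
    rw [map_sub Y, hW']
    abel

theorem ContinuousLinearMap.inverse_one_sub_comp_apply_comm {a b : E →L[𝕜] E}
    (h : IsUnit (1 - a ∘L b)) (v : E) :
    Ring.inverse (1 - a ∘L b) (a v) = a (Ring.inverse (1 - b ∘L a) v) :=
  congrArg (· v) (Ring.mul_inverse_one_sub_mul_comm (isUnit_one_sub_comp_comm h) h).symm

end Operators

section SelfAdjoint

variable {E : Type*} [NormedAddCommGroup E] [InnerProductSpace ℂ E] [CompleteSpace E]

theorem adjoint_inverse_one_sub_comp {a b : E →L[ℂ] E} (ha : IsSelfAdjoint a)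
    (hb : IsSelfAdjoint b) : adjoint (Ring.inverse (1 - b ∘L a)) = Ring.inverse (1 - a ∘L b) := by
  rw [← star_eq_adjoint, ← Ring.inverse_star, star_sub, star_one, star_eq_adjoint, adjoint_comp,
    ha.adjoint_eq, hb.adjoint_eq]

theorem isSelfAdjoint_comp_inverse_one_sub_comp {a b : E →L[ℂ] E} (ha : IsSelfAdjoint a)
    (hb : IsSelfAdjoint b) (hba : IsUnit (1 - b ∘L a)) :
    IsSelfAdjoint (a ∘L Ring.inverse (1 - b ∘L a)) := by
  rw [isSelfAdjoint_iff', adjoint_comp, adjoint_inverse_one_sub_comp ha hb, ha.adjoint_eq]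
  exact (Ring.mul_inverse_one_sub_mul_comm hba (isUnit_one_sub_comp_comm hba)).symm

end SelfAdjoint

theorem ofReal_notMem_Zdom {r : ℝ} (hr : 1 ≤ |r|) : (r : ℂ) ∉ Zdom :=
  not_not.2 ⟨r, le_abs'.1 hr, rfl⟩

section Resolvent

variable {E : Type*} [NormedAddCommGroup E] [InnerProductSpace ℂ E] [CompleteSpace E]

/-- `I - zT` is invertible because `z⁻¹` would otherwise be a spectral value of `T`, hence a real
number in `[-1, 1]`, which puts `z` on one of the two cuts. -/
theorem isUnit_one_sub_smul_of_mem_Zdom {T : E →L[ℂ] E} (hT : IsSelfAdjoint T) (hT1 : ‖T‖ ≤ 1)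
    {z : ℂ} (hz : z ∈ Zdom) : IsUnit (1 - z • T) := by
  rcases eq_or_ne z 0 with rfl | hz0
  · simp
  have hspec : z⁻¹ ∉ spectrum ℂ T := by
    intro hmem
    have hre : z⁻¹ = ((z⁻¹).re : ℂ) := hT.mem_spectrum_eq_re hmem
    have hle : |(z⁻¹).re| ≤ 1 := by
      have h := spectrum.norm_le_norm_mul_of_mem hmem
      rw [hre, Complex.norm_real, Real.norm_eq_abs] at h
      exact h.trans (mul_le_one₀ hT1 (norm_nonneg _) norm_id_le)
    have hne : (z⁻¹).re ≠ 0 := fun h0 => by simp [h0, hz0] at hre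
    refine ofReal_notMem_Zdom (r := (z⁻¹).re⁻¹) ?_ (by rwa [Complex.ofReal_inv, ← hre, inv_inv])
    rw [abs_inv]
    exact one_le_inv₀ (abs_pos.2 hne) |>.2 hle
  have hsub : (1 : E →L[ℂ] E) - z • T = z • (algebraMap ℂ (E →L[ℂ] E) z⁻¹ - T) := by
    rw [smul_sub, Algebra.algebraMap_eq_smul_one, smul_smul, mul_inv_cancel₀ hz0, one_smul]
  rw [hsub]
  exact (spectrum.notMem_iff.1 hspec).smul (Units.mk0 z hz0)

end Resolvent

section Block

variable {E E' : Type*} [NormedAddCommGroup E] [InnerProductSpace ℂ E] [CompleteSpace E]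
  [NormedAddCommGroup E'] [InnerProductSpace ℂ E'] [CompleteSpace E']

@[simp]
theorem blockOp_apply_fst (D : E →L[ℂ] E) (C : E' →L[ℂ] E) (B : E →L[ℂ] E') (F : E' →L[ℂ] E')
    (x : WithLp 2 (E × E')) : (blockOp D C B F x).fst = D x.fst + C x.snd := rfl

@[simp]
theorem blockOp_apply_snd (D : E →L[ℂ] E) (C : E' →L[ℂ] E) (B : E →L[ℂ] E') (F : E' →L[ℂ] E')
    (x : WithLp 2 (E × E')) : (blockOp D C B F x).snd = B x.fst + F x.snd := rfl

theorem norm_blockOp_le_one_iff {D : E →L[ℂ] E} {C : E' →L[ℂ] E} {B : E →L[ℂ] E'}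
    {F : E' →L[ℂ] E'} : ‖blockOp D C B F‖ ≤ 1 ↔
      ∀ a b, ‖D a + C b‖ ^ 2 + ‖B a + F b‖ ^ 2 ≤ ‖a‖ ^ 2 + ‖b‖ ^ 2 := by
  constructor
  · intro h a b
    have hx : ‖blockOp D C B F (WithLp.toLp 2 (a, b))‖ ≤ ‖WithLp.toLp 2 (a, b)‖ :=
      (le_opNorm _ _).trans (mul_le_of_le_one_left (norm_nonneg _) h)
    simpa only [WithLp.prod_norm_sq_eq_of_L2, blockOp_apply_fst, blockOp_apply_snd,
      WithLp.toLp_fst, WithLp.toLp_snd] using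
      pow_le_pow_left₀ (norm_nonneg _) hx 2
  · intro h
    refine opNorm_le_bound _ zero_le_one fun x => ?_
    rw [one_mul, ← sq_le_sq₀ (norm_nonneg _) (norm_nonneg _), WithLp.prod_norm_sq_eq_of_L2,
      WithLp.prod_norm_sq_eq_of_L2 x]
    exact h x.fst x.snd

theorem norm_le_one_of_norm_blockOp_le_one_left {D : E →L[ℂ] E} {C : E' →L[ℂ] E}
    {B : E →L[ℂ] E'} {F : E' →L[ℂ] E'} (h : ‖blockOp D C B F‖ ≤ 1) : ‖D‖ ≤ 1 := by
  refine opNorm_le_bound _ zero_le_one fun a => ?_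
  have ha := norm_blockOp_le_one_iff.1 h a 0
  simp only [map_zero, add_zero, norm_zero] at ha
  rw [one_mul, ← sq_le_sq₀ (norm_nonneg _) (norm_nonneg _)]
  linarith [sq_nonneg ‖B a‖]

theorem norm_le_one_of_norm_blockOp_le_one_right {D : E →L[ℂ] E} {C : E' →L[ℂ] E}
    {B : E →L[ℂ] E'} {F : E' →L[ℂ] E'} (h : ‖blockOp D C B F‖ ≤ 1) : ‖F‖ ≤ 1 := by
  refine opNorm_le_bound _ zero_le_one fun b => ?_
  have hb := norm_blockOp_le_one_iff.1 h 0 b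
  simp only [map_zero, zero_add, norm_zero] at hb
  rw [one_mul, ← sq_le_sq₀ (norm_nonneg _) (norm_nonneg _)]
  linarith [sq_nonneg ‖C b‖]

theorem isSelfAdjoint_blockOp {D : E →L[ℂ] E} {F : E' →L[ℂ] E'} (hD : IsSelfAdjoint D)
    (hF : IsSelfAdjoint F) (C : E' →L[ℂ] E) : IsSelfAdjoint (blockOp D C (adjoint C) F) := by
  have hDs : ∀ a b, inner ℂ (D a) b = inner ℂ a (D b) := hD.isSymmetric
  have hFs : ∀ a b, inner ℂ (F a) b = inner ℂ a (F b) := hF.isSymmetric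
  rw [isSelfAdjoint_iff_isSymmetric]
  intro x y
  simp only [coe_coe, WithLp.prod_inner_apply, WithLp.ofLp_fst, WithLp.ofLp_snd,
    blockOp_apply_fst, blockOp_apply_snd, inner_add_left, inner_add_right, adjoint_inner_left,
    adjoint_inner_right, hDs, hFs]
  ring

theorem transfer_apply_of_eq {D : E →L[ℂ] E} {C : E' →L[ℂ] E} {B : E →L[ℂ] E'}
    {F : E' →L[ℂ] E'} {z : ℂ} (hF : IsUnit (1 - z • F)) {u : E} {v : E'} (hv : v = z • (B u + F v)) :
    transfer D C B F z u = D u + C v := by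
  have hinv : Ring.inverse (1 - z • F) (z • B u) = v := by
    refine inverse_apply_of_apply_eq hF ?_
    rw [sub_apply, one_apply_eq_self, smul_apply]
    nth_rw 1 [hv]
    rw [smul_add, add_sub_cancel_right]
  rw [transfer, add_apply, smul_apply, comp_apply, comp_apply, ← map_smul C, ← map_smul, hinv]

end Block

section FeedbackConnection

variable {𝕜 U V W : Type*} [NontriviallyNormedField 𝕜]
  [NormedAddCommGroup U] [NormedSpace 𝕜 U] [NormedAddCommGroup V] [NormedSpace 𝕜 V]
  [NormedAddCommGroup W] [NormedSpace 𝕜 W]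

/-- `[[T11, T12], [T21, T22]]` on `U ⊕ W` is the feedback connection of `[[K11, K12], [K21, K22]]`
on `U ⊕ V` and `[[A, B], [C, G]]` on `V ⊕ W`: the `V`-output of each block is the `V`-input of the
other. -/
def IsFeedbackConnection (K11 : U →L[𝕜] U) (K12 : V →L[𝕜] U) (K21 : U →L[𝕜] V)
    (K22 : V →L[𝕜] V) (A : V →L[𝕜] V) (B : W →L[𝕜] V) (C : V →L[𝕜] W) (G : W →L[𝕜] W)
    (T11 : U →L[𝕜] U) (T12 : W →L[𝕜] U) (T21 : U →L[𝕜] W) (T22 : W →L[𝕜] W) : Prop :=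
  ∀ m k, ∃ h, h = K21 m + K22 (A h + B k) ∧ T11 m + T12 k = K11 m + K12 (A h + B k) ∧
    T21 m + T22 k = C h + G k

theorem isFeedbackConnection_redheffer {K11 : U →L[𝕜] U} {K12 : V →L[𝕜] U} {K21 : U →L[𝕜] V}
    {K22 : V →L[𝕜] V} {A : V →L[𝕜] V} {B : W →L[𝕜] V} {C : V →L[𝕜] W} {G : W →L[𝕜] W}
    (hN : IsUnit (1 - K22 ∘L A)) :
    IsFeedbackConnection K11 K12 K21 K22 A B C G
      (K11 + K12 ∘L A ∘L Ring.inverse (1 - K22 ∘L A) ∘L K21)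
      (K12 ∘L Ring.inverse (1 - A ∘L K22) ∘L B)
      (C ∘L Ring.inverse (1 - K22 ∘L A) ∘L K21)
      (G + C ∘L K22 ∘L Ring.inverse (1 - A ∘L K22) ∘L B) := by
  set N := Ring.inverse (1 - K22 ∘L A)
  set N' := Ring.inverse (1 - A ∘L K22)
  have hN' : IsUnit (1 - A ∘L K22) := isUnit_one_sub_comp_comm hN
  have hNK : ∀ v, N (K22 v) = K22 (N' v) := inverse_one_sub_comp_apply_comm hN
  have hN1 : ∀ v, N v = v + K22 (A (N v)) := inverse_one_sub_apply hN
  have hN'1 : ∀ v, N' v = v + A (K22 (N' v)) := inverse_one_sub_apply hN'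
  intro m k
  refine ⟨N (K21 m + K22 (B k)), ?_, ?_, ?_⟩
  · nth_rw 1 [hN1]
    rw [map_add K22 (A _)]
    abel
  · rw [add_apply, comp_apply, comp_apply, comp_apply, comp_apply, comp_apply, map_add N,
      hNK, map_add A]
    nth_rw 1 [hN'1 (B k)]
    simp only [map_add]
    abel
  · rw [add_apply, comp_apply, comp_apply, comp_apply, comp_apply, comp_apply, map_add N,
      hNK, map_add C]
    abel

end FeedbackConnection

section HilbertFeedbackConnection

variable {U V W : Type*} [NormedAddCommGroup U] [InnerProductSpace ℂ U] [CompleteSpace U]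
  [NormedAddCommGroup V] [InnerProductSpace ℂ V] [CompleteSpace V]
  [NormedAddCommGroup W] [InnerProductSpace ℂ W] [CompleteSpace W]
  {K11 : U →L[ℂ] U} {K12 : V →L[ℂ] U} {K21 : U →L[ℂ] V} {K22 : V →L[ℂ] V}
  {A : V →L[ℂ] V} {B : W →L[ℂ] V} {C : V →L[ℂ] W} {G : W →L[ℂ] W}
  {T11 : U →L[ℂ] U} {T12 : W →L[ℂ] U} {T21 : U →L[ℂ] W} {T22 : W →L[ℂ] W}

theorem IsFeedbackConnection.norm_blockOp_le_one
    (hT : IsFeedbackConnection K11 K12 K21 K22 A B C G T11 T12 T21 T22)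
    (hK : ‖blockOp K11 K12 K21 K22‖ ≤ 1) (hS : ‖blockOp A B C G‖ ≤ 1) :
    ‖blockOp T11 T12 T21 T22‖ ≤ 1 := by
  refine norm_blockOp_le_one_iff.2 fun m k => ?_
  obtain ⟨h, hh, hT1, hT2⟩ := hT m k
  have hKmh := norm_blockOp_le_one_iff.1 hK m (A h + B k)
  have hShk := norm_blockOp_le_one_iff.1 hS h k
  rw [← hh] at hKmh
  rw [hT1, hT2]
  linarith

theorem IsFeedbackConnection.transfer_eq
    (hT : IsFeedbackConnection K11 K12 K21 K22 A B C G T11 T12 T21 T22) {z : ℂ}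
    (hG : IsUnit (1 - z • G)) (hT22 : IsUnit (1 - z • T22))
    (hP : IsUnit (1 - K22 ∘L transfer A B C G z)) :
    transfer T11 T12 T21 T22 z = K11 + K12 ∘L
      (transfer A B C G z ∘L Ring.inverse (1 - K22 ∘L transfer A B C G z)) ∘L K21 := by
  ext m
  set k := Ring.inverse (1 - z • T22) (z • T21 m)
  have hk : k = z • (T21 m + T22 k) := by
    rw [smul_add]
    exact inverse_one_sub_apply hT22 _
  obtain ⟨h, hh, hT1, hT2⟩ := hT m k
  have hΩ : transfer A B C G z h = A h + B k := transfer_apply_of_eq hG (hT2 ▸ hk)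
  have hPh : Ring.inverse (1 - K22 ∘L transfer A B C G z) (K21 m) = h := by
    refine inverse_apply_of_apply_eq hP ?_
    rw [sub_apply, one_apply_eq_self, comp_apply, hΩ, sub_eq_iff_eq_add]
    exact hh
  calc transfer T11 T12 T21 T22 z m = T11 m + T12 k := transfer_apply_of_eq hT22 hk
    _ = K11 m + K12 (A h + B k) := hT1
    _ = _ := by rw [add_apply, comp_apply, comp_apply, comp_apply, hPh, hΩ]

/-- `1 - K22 Ω(z)` and `1 - z T22` are the two Schur complements of
`[[1 - K22 A, -K22 B], [-z C, 1 - z G]]`; they factor as `(1 - K22 A)(1 - XY)` and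
`(1 - z G)(1 - YX)`, so Jacobson's lemma transfers invertibility from one to the other. -/
theorem isUnit_one_sub_comp_transfer {z : ℂ} (hN : IsUnit (1 - K22 ∘L A))
    (hG : IsUnit (1 - z • G))
    (hT22 : IsUnit (1 - z • (G + C ∘L K22 ∘L Ring.inverse (1 - A ∘L K22) ∘L B))) :
    IsUnit (1 - K22 ∘L transfer A B C G z) := by
  set N := Ring.inverse (1 - K22 ∘L A)
  set R := Ring.inverse (1 - z • G)
  set X := N ∘L K22 ∘L B
  set Y := R ∘L (z • C)
  have hNK : ∀ v, N (K22 v) = K22 (Ring.inverse (1 - A ∘L K22) v) :=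
    inverse_one_sub_comp_apply_comm hN
  have hN0 : ∀ y, N y - K22 (A (N y)) = y := apply_inverse_apply hN
  have hR0 : ∀ y, R y - z • G (R y) = y := apply_inverse_apply hG
  have hΩ : 1 - K22 ∘L transfer A B C G z = (1 - K22 ∘L A) * (1 - X ∘L Y) := by
    ext v
    simp only [transfer, X, Y, mul_apply_eq_comp, sub_apply, one_apply_eq_self, comp_apply,
      add_apply, smul_apply, map_sub, map_add, map_smul]
    rw [hN0]
    abel
  have hQ : 1 - z • (G + C ∘L K22 ∘L Ring.inverse (1 - A ∘L K22) ∘L B) =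
      (1 - z • G) * (1 - Y ∘L X) := by
    ext v
    simp only [X, Y, mul_apply_eq_comp, sub_apply, one_apply_eq_self, comp_apply,
      add_apply, smul_apply, map_sub]
    rw [hR0, hNK, smul_add]
    abel
  rw [hQ, ← hG.unit_spec, Units.isUnit_units_mul] at hT22
  rw [hΩ]
  exact hN.mul (isUnit_one_sub_comp_comm hT22)

end HilbertFeedbackConnection

theorem redheffer_product_realization_general
    (A : H →L[ℂ] H) (B : K →L[ℂ] H) (G : K →L[ℂ] K)
    (hA : IsSelfAdjoint A) (hG : IsSelfAdjoint G)
    (hScontr : ‖blockOp A B (adjoint B) G‖ ≤ 1)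
    (K11 : M →L[ℂ] M) (K12 : H →L[ℂ] M) (K22 : H →L[ℂ] H)
    (hK11 : IsSelfAdjoint K11) (hK22 : IsSelfAdjoint K22)
    (hKcontr : ‖blockOp K11 K12 (adjoint K12) K22‖ ≤ 1)
    (hK22norm : ‖K22‖ < 1) :
    IsSelfAdjoint (blockOp
      (K11 + K12 ∘L A ∘L Ring.inverse ((1 : H →L[ℂ] H) - K22 ∘L A) ∘L adjoint K12)
      (K12 ∘L Ring.inverse ((1 : H →L[ℂ] H) - A ∘L K22) ∘L B)
      (adjoint B ∘L Ring.inverse ((1 : H →L[ℂ] H) - K22 ∘L A) ∘L adjoint K12)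
      (G + adjoint B ∘L K22 ∘L Ring.inverse ((1 : H →L[ℂ] H) - A ∘L K22) ∘L B)) ∧
    ‖blockOp
      (K11 + K12 ∘L A ∘L Ring.inverse ((1 : H →L[ℂ] H) - K22 ∘L A) ∘L adjoint K12)
      (K12 ∘L Ring.inverse ((1 : H →L[ℂ] H) - A ∘L K22) ∘L B)
      (adjoint B ∘L Ring.inverse ((1 : H →L[ℂ] H) - K22 ∘L A) ∘L adjoint K12)
      (G + adjoint B ∘L K22 ∘L Ring.inverse ((1 : H →L[ℂ] H) - A ∘L K22) ∘L B)‖ ≤ 1 ∧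
    (∀ z ∈ Zdom,
      transfer
        (K11 + K12 ∘L A ∘L Ring.inverse ((1 : H →L[ℂ] H) - K22 ∘L A) ∘L adjoint K12)
        (K12 ∘L Ring.inverse ((1 : H →L[ℂ] H) - A ∘L K22) ∘L B)
        (adjoint B ∘L Ring.inverse ((1 : H →L[ℂ] H) - K22 ∘L A) ∘L adjoint K12)
        (G + adjoint B ∘L K22 ∘L Ring.inverse ((1 : H →L[ℂ] H) - A ∘L K22) ∘L B) z =
      K11 + K12 ∘L (transfer A B (adjoint B) G z ∘L
        Ring.inverse ((1 : H →L[ℂ] H) - K22 ∘L transfer A B (adjoint B) G z)) ∘L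
          adjoint K12) := by
  have hN : IsUnit (1 - K22 ∘L A) :=
    isUnit_one_sub_of_norm_lt_one <| (opNorm_comp_le K22 A).trans_lt <|
      mul_lt_one_of_nonneg_of_lt_one_left (norm_nonneg _) hK22norm
        (norm_le_one_of_norm_blockOp_le_one_left hScontr)
  have hT := isFeedbackConnection_redheffer (K11 := K11) (K12 := K12) (K21 := adjoint K12)
    (B := B) (C := adjoint B) (G := G) hN
  have hTcontr := hT.norm_blockOp_le_one hKcontr hScontr
  have hT11 : IsSelfAdjoint
      (K11 + K12 ∘L A ∘L Ring.inverse ((1 : H →L[ℂ] H) - K22 ∘L A) ∘L adjoint K12) :=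
    hK11.add ((isSelfAdjoint_comp_inverse_one_sub_comp hA hK22 hN).conj_adjoint K12)
  have hT22 : IsSelfAdjoint
      (G + adjoint B ∘L K22 ∘L Ring.inverse ((1 : H →L[ℂ] H) - A ∘L K22) ∘L B) :=
    hG.add ((isSelfAdjoint_comp_inverse_one_sub_comp hK22 hA
      (isUnit_one_sub_comp_comm hN)).adjoint_conj B)
  have hT12 : adjoint (K12 ∘L Ring.inverse ((1 : H →L[ℂ] H) - A ∘L K22) ∘L B) =
      adjoint B ∘L Ring.inverse ((1 : H →L[ℂ] H) - K22 ∘L A) ∘L adjoint K12 := by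
    rw [adjoint_comp, adjoint_comp, adjoint_inverse_one_sub_comp hK22 hA, comp_assoc]
  refine ⟨hT12 ▸ isSelfAdjoint_blockOp hT11 hT22 _, hTcontr, fun z hz => ?_⟩
  have hR := isUnit_one_sub_smul_of_mem_Zdom hG
    (norm_le_one_of_norm_blockOp_le_one_right hScontr) hz
  have hQ := isUnit_one_sub_smul_of_mem_Zdom hT22
    (norm_le_one_of_norm_blockOp_le_one_right hTcontr) hz
  exact hT.transfer_eq hR hQ (isUnit_one_sub_comp_transfer hN hR hQ)

/-- **Redheffer product.** Given selfadjoint contractions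
`S = [[A, B], [B*, G]]` on `H ⊕ K` and `K = [[K₁₁, K₁₂], [K₁₂*, K₂₂]]` on `M ⊕ H` with
`‖K₂₂‖ < 1`, the Redheffer product `T = K • S` is a selfadjoint contraction on `M ⊕ K`
whose transfer function equals `Θ(z) = K₁₁ + K₁₂Ω(z)(I − K₂₂Ω(z))⁻¹K₁₂*`, where `Ω` is
the transfer function of `{S; H, H, K}`. -/
theorem redheffer_product_realization
    (A : H →L[ℂ] H) (B : K →L[ℂ] H) (G : K →L[ℂ] K)
    (hA : IsSelfAdjoint A) (hG : IsSelfAdjoint G)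
    (hSsa : IsSelfAdjoint (blockOp A B (adjoint B) G))
    (hScontr : ‖blockOp A B (adjoint B) G‖ ≤ 1)
    (K11 : M →L[ℂ] M) (K12 : H →L[ℂ] M) (K22 : H →L[ℂ] H)
    (hK11 : IsSelfAdjoint K11) (hK22 : IsSelfAdjoint K22)
    (hKsa : IsSelfAdjoint (blockOp K11 K12 (adjoint K12) K22))
    (hKcontr : ‖blockOp K11 K12 (adjoint K12) K22‖ ≤ 1)
    (hK22norm : ‖K22‖ < 1) :
    IsSelfAdjoint (blockOp
      (K11 + K12 ∘L A ∘L Ring.inverse ((1 : H →L[ℂ] H) - K22 ∘L A) ∘L adjoint K12)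
      (K12 ∘L Ring.inverse ((1 : H →L[ℂ] H) - A ∘L K22) ∘L B)
      (adjoint B ∘L Ring.inverse ((1 : H →L[ℂ] H) - K22 ∘L A) ∘L adjoint K12)
      (G + adjoint B ∘L K22 ∘L Ring.inverse ((1 : H →L[ℂ] H) - A ∘L K22) ∘L B)) ∧
    ‖blockOp
      (K11 + K12 ∘L A ∘L Ring.inverse ((1 : H →L[ℂ] H) - K22 ∘L A) ∘L adjoint K12)
      (K12 ∘L Ring.inverse ((1 : H →L[ℂ] H) - A ∘L K22) ∘L B)
      (adjoint B ∘L Ring.inverse ((1 : H →L[ℂ] H) - K22 ∘L A) ∘L adjoint K12)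
      (G + adjoint B ∘L K22 ∘L Ring.inverse ((1 : H →L[ℂ] H) - A ∘L K22) ∘L B)‖ ≤ 1 ∧
    (∀ z ∈ Zdom,
      transfer
        (K11 + K12 ∘L A ∘L Ring.inverse ((1 : H →L[ℂ] H) - K22 ∘L A) ∘L adjoint K12)
        (K12 ∘L Ring.inverse ((1 : H →L[ℂ] H) - A ∘L K22) ∘L B)
        (adjoint B ∘L Ring.inverse ((1 : H →L[ℂ] H) - K22 ∘L A) ∘L adjoint K12)
        (G + adjoint B ∘L K22 ∘L Ring.inverse ((1 : H →L[ℂ] H) - A ∘L K22) ∘L B) z =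
      K11 + K12 ∘L (transfer A B (adjoint B) G z ∘L
        Ring.inverse ((1 : H →L[ℂ] H) - K22 ∘L transfer A B (adjoint B) G z)) ∘L
          adjoint K12) :=
  redheffer_product_realization_general A B G hA hG hScontr K11 K12 K22 hK11 hK22 hKcontr hK22norm
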